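/- arXiv:2212.01572 — 4 statements merged into one kernel-verified Lean document; each statement's English description precedes it below -/
import Mathlib

section
/- Let t ≥ 1, let f : ℝ^t → ℝ be Lipschitz with Lipschitz constant L₀, fix k ∈ {1, …, t}, and let g : ℝ^t → ℝ be a measurable function with |g| ≤ L₀ everywhere that coincides with the partial derivative ∂f/∂x_k at every point of ℝ^t where this partial derivative exists. For each n let v(n) ∈ ℝ^{n×t} with rows v_i(n), and let V be a random vector in ℝ^t with E‖V‖² < ∞ such that v(n) →_{W2} V. Assume the law of V is absolutely continuous with respect to Lebesgue measure on ℝ^t and that g is continuous at almost every point with respect to the law of V. Then for every pseudo-Lipschitz function φ : ℝ^{t+1} → ℝ of order 2, lim_{n→∞} (1/n) Σ_{i=1}^n φ(v_{i,1}(n), …, v_{i,t}(n), g(v_i(n))) = E[φ(V_1, …, V_t, g(V))]. -/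
open MeasureTheory ProbabilityTheory Filter

/-- A function `ψ : E → ℝ` is pseudo-Lipschitz of order 2 if there is a constant `L > 0`
with `|ψ u - ψ v| ≤ L ‖u - v‖ (1 + ‖u‖ + ‖v‖)` for all `u, v`. -/
def PseudoLipschitz {E : Type*} [NormedAddCommGroup E] (ψ : E → ℝ) : Prop :=
  ∃ L : ℝ, 0 < L ∧ ∀ u v : E, |ψ u - ψ v| ≤ L * ‖u - v‖ * (1 + ‖u‖ + ‖v‖)

/-- The joint empirical distribution of the rows of the arrays `v n` converges in
Wasserstein-2 distance to the law of the random vector `V`. -/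
def ConvW2 {k : ℕ} (v : ∀ n : ℕ, Fin n → EuclideanSpace ℝ (Fin k))
    {Ωs : Type*} [MeasureSpace Ωs] (V : Ωs → EuclideanSpace ℝ (Fin k)) : Prop :=
  ∀ ψ : EuclideanSpace ℝ (Fin k) → ℝ, PseudoLipschitz ψ →
    Tendsto (fun n : ℕ => (n : ℝ)⁻¹ * ∑ i : Fin n, ψ (v n i)) atTop
      (nhds (∫ ω, ψ (V ω)))

/-- Append a real coordinate at the end of a vector of `ℝ^t`. -/
noncomputable def snocE {t : ℕ} (x : EuclideanSpace ℝ (Fin t)) (r : ℝ) :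
    EuclideanSpace ℝ (Fin (t + 1)) :=
  (WithLp.equiv 2 (Fin (t + 1) → ℝ)).symm (Fin.snoc ((WithLp.equiv 2 (Fin t → ℝ)) x) r)

/-- Update the `k`-th coordinate of a vector of `ℝ^t`. -/
noncomputable def updE {t : ℕ} (x : EuclideanSpace ℝ (Fin t)) (k : Fin t) (s : ℝ) :
    EuclideanSpace ℝ (Fin t) :=
  (WithLp.equiv 2 (Fin t → ℝ)).symm (Function.update ((WithLp.equiv 2 (Fin t → ℝ)) x) k s)

/-!
Sandwich `g` (with `|g| ≤ B`) between its `m`-Lipschitz upper and lower envelopes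
`uₘ ≥ g ≥ ℓₘ`, which converge to `g` at every continuity point of `g`. Appending `uₘ` instead
of `g` turns a pseudo-Lipschitz test function into a pseudo-Lipschitz function of `x`, to which
`W₂` convergence applies. The cost of the replacement is at most the pseudo-Lipschitz weight
`(uₘ - ℓₘ)(x) · L (1 + 2B + 2‖x‖)`; its empirical means converge to its mean under the law of
`V`, and that mean tends to `0` as `m → ∞` by dominated convergence.
-/

open scoped NNReal Topology

namespace PseudoLipschitz

variable {E F : Type*} [NormedAddCommGroup E] [NormedAddCommGroup F] {ψ : E → ℝ}

theorem continuous (hψ : PseudoLipschitz ψ) : Continuous ψ := by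
  obtain ⟨L, -, hL⟩ := hψ
  refine continuous_iff_continuousAt.2 fun u => ?_
  rw [ContinuousAt, tendsto_iff_norm_sub_tendsto_zero]
  have hlim := (by fun_prop : Continuous fun v => L * ‖v - u‖ * (1 + ‖v‖ + ‖u‖)).tendsto u
  rw [sub_self, norm_zero, mul_zero, zero_mul] at hlim
  exact squeeze_zero (fun _ => norm_nonneg _) (fun v => hL v u) hlim

theorem integrable_comp {Ω : Type*} [MeasurableSpace Ω] {μ : Measure Ω} [IsFiniteMeasure μ]
    (hψ : PseudoLipschitz ψ) {W : Ω → E} (hW : MemLp W 2 μ) :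
    Integrable (fun ω => ψ (W ω)) μ := by
  obtain ⟨L, hL0, hL⟩ := id hψ
  have hbound : Integrable (fun ω => |ψ 0| + L * ‖W ω‖ + L * ‖W ω‖ ^ 2) μ :=
    ((integrable_const _).add ((hW.integrable one_le_two).norm.const_mul L)).add
      ((hW.integrable_norm_pow two_ne_zero).const_mul L)
  refine hbound.mono' (hψ.continuous.comp_aestronglyMeasurable hW.1) (.of_forall fun ω => ?_)
  have h := hL (W ω) 0
  simp only [sub_zero, norm_zero, add_zero] at h
  rw [Real.norm_eq_abs]
  nlinarith [abs_sub_abs_le_abs_sub (ψ (W ω)) (ψ 0)]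

theorem comp_lipschitzWith (hψ : PseudoLipschitz ψ) {K : ℝ≥0} {G : F → E}
    (hG : LipschitzWith K G) : PseudoLipschitz (fun x => ψ (G x)) := by
  obtain ⟨L, hL0, hL⟩ := hψ
  refine ⟨L * (K + 1) * (1 + 2 * ‖G 0‖ + K), by positivity, fun x y => ?_⟩
  have hG' : ∀ x y, ‖G x - G y‖ ≤ K * ‖x - y‖ := by
    simpa only [dist_eq_norm] using hG.dist_le_mul
  have hx : ‖G x‖ ≤ ‖G 0‖ + K * ‖x‖ := by
    simpa using (norm_le_norm_add_norm_sub' (G x) (G 0)).trans (by simpa using hG' x 0)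
  have hy : ‖G y‖ ≤ ‖G 0‖ + K * ‖y‖ := by
    simpa using (norm_le_norm_add_norm_sub' (G y) (G 0)).trans (by simpa using hG' y 0)
  calc |ψ (G x) - ψ (G y)| ≤ L * ‖G x - G y‖ * (1 + ‖G x‖ + ‖G y‖) := hL _ _
    _ ≤ L * ((K + 1) * ‖x - y‖) * ((1 + 2 * ‖G 0‖ + K) * (1 + ‖x‖ + ‖y‖)) := by
      gcongr
      · linarith [hG' x y, norm_nonneg (x - y)]
      · nlinarith [norm_nonneg x, norm_nonneg y, norm_nonneg (G 0), K.coe_nonneg]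
    _ = _ := by ring

theorem of_lipschitzWith_mul {d ρ : E → ℝ} {K K' : ℝ≥0} {D : ℝ} (hd : LipschitzWith K d)
    (hρ : LipschitzWith K' ρ) (hdD : ∀ x, |d x| ≤ D) : PseudoLipschitz (fun x => d x * ρ x) := by
  have hD : 0 ≤ D := (abs_nonneg _).trans (hdD 0)
  refine ⟨K * |ρ 0| + K * K' + D * K' + 1, by positivity, fun x y => ?_⟩
  have hd' := hd.dist_le_mul x y
  have hρ' := hρ.dist_le_mul x y
  have hρx : |ρ x| ≤ |ρ 0| + K' * ‖x‖ := by
    have := hρ.dist_le_mul x 0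
    rw [Real.dist_eq, dist_zero_right] at this
    linarith [abs_sub_abs_le_abs_sub (ρ x) (ρ 0)]
  rw [Real.dist_eq, dist_eq_norm] at hd' hρ'
  have hsplit : d x * ρ x - d y * ρ y = (d x - d y) * ρ x + d y * (ρ x - ρ y) := by ring
  calc |d x * ρ x - d y * ρ y| ≤ |d x - d y| * |ρ x| + |d y| * |ρ x - ρ y| := by
        rw [hsplit, ← abs_mul, ← abs_mul]; exact abs_add_le _ _
    _ ≤ K * ‖x - y‖ * (|ρ 0| + K' * ‖x‖) + D * (K' * ‖x - y‖) := by
        gcongr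
        exact hdD y
    _ ≤ _ := by
        have hs := norm_nonneg (x - y)
        have hxy : 0 ≤ ‖x‖ + ‖y‖ := by positivity
        have h1 : 0 ≤ K * |ρ 0| * ‖x - y‖ := by positivity
        have h2 : 0 ≤ K * K' * ‖x - y‖ := by positivity
        have h3 : 0 ≤ D * K' * ‖x - y‖ := by positivity
        nlinarith [mul_nonneg h1 hxy, mul_nonneg h2 (norm_nonneg y), mul_nonneg h3 hxy,
          mul_nonneg hs hxy]

end PseudoLipschitz

section snocE

variable {t : ℕ}

@[simp]
theorem snocE_apply_castSucc (x : EuclideanSpace ℝ (Fin t)) (a : ℝ) (i : Fin t) :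
    snocE x a i.castSucc = x i := by
  simp [snocE]

@[simp]
theorem snocE_apply_last (x : EuclideanSpace ℝ (Fin t)) (a : ℝ) : snocE x a (Fin.last t) = a := by
  simp [snocE]

theorem snocE_sub_snocE (x y : EuclideanSpace ℝ (Fin t)) (a b : ℝ) :
    snocE x a - snocE y b = snocE (x - y) (a - b) := by
  ext i
  induction i using Fin.lastCases <;> simp

theorem norm_snocE_sq (x : EuclideanSpace ℝ (Fin t)) (a : ℝ) :
    ‖snocE x a‖ ^ 2 = ‖x‖ ^ 2 + a ^ 2 := by
  simp [EuclideanSpace.real_norm_sq_eq, Fin.sum_univ_castSucc]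

theorem norm_snocE_le (x : EuclideanSpace ℝ (Fin t)) (a : ℝ) : ‖snocE x a‖ ≤ ‖x‖ + |a| := by
  refine le_of_sq_le_sq ?_ (by positivity)
  rw [norm_snocE_sq, add_sq, sq_abs]
  nlinarith [norm_nonneg x, abs_nonneg a]

theorem continuous_snocE : Continuous fun p : EuclideanSpace ℝ (Fin t) × ℝ => snocE p.1 p.2 :=
  (PiLp.continuous_toLp 2 _).comp (Continuous.finSnoc (A := fun _ => ℝ)
    ((PiLp.continuous_ofLp 2 _).comp continuous_fst) continuous_snd)

theorem LipschitzWith.snocE {K : ℝ≥0} {G : EuclideanSpace ℝ (Fin t) → ℝ}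
    (hG : LipschitzWith K G) : LipschitzWith (1 + K) fun x => snocE x (G x) := by
  refine LipschitzWith.of_dist_le_mul fun x y => ?_
  rw [dist_eq_norm, snocE_sub_snocE, dist_eq_norm]
  have := hG.dist_le_mul x y
  rw [Real.dist_eq, dist_eq_norm] at this
  push_cast
  linarith [norm_snocE_le (x - y) (G x - G y)]

theorem abs_sub_le_of_snocE {ψ : EuclideanSpace ℝ (Fin (t + 1)) → ℝ} {L B : ℝ}
    (hψ : ∀ u v, |ψ u - ψ v| ≤ L * ‖u - v‖ * (1 + ‖u‖ + ‖v‖)) (hL : 0 ≤ L)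
    (x : EuclideanSpace ℝ (Fin t)) {a b : ℝ} (ha : |a| ≤ B) (hb : |b| ≤ B) :
    |ψ (snocE x a) - ψ (snocE x b)| ≤ |a - b| * (L * (1 + 2 * B) + 2 * L * ‖x‖) := by
  have hab : ‖snocE x a - snocE x b‖ ≤ |a - b| := by
    simpa [snocE_sub_snocE] using norm_snocE_le (x - x) (a - b)
  have hsum : 1 + ‖snocE x a‖ + ‖snocE x b‖ ≤ 1 + 2 * B + 2 * ‖x‖ := by
    linarith [norm_snocE_le x a, norm_snocE_le x b]
  calc |ψ (snocE x a) - ψ (snocE x b)|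
      ≤ L * |a - b| * (1 + 2 * B + 2 * ‖x‖) :=
        (hψ _ _).trans
          (mul_le_mul (mul_le_mul_of_nonneg_left hab hL) hsum (by positivity) (by positivity))
    _ = |a - b| * (L * (1 + 2 * B) + 2 * L * ‖x‖) := by ring

end snocE

/-- The smallest `K`-Lipschitz majorant of `g` (for `g` bounded above). -/
noncomputable def upperLipEnvelope {X : Type*} [PseudoMetricSpace X] (g : X → ℝ) (K : ℝ≥0)
    (x : X) : ℝ :=
  ⨆ y, g y - K * dist x y

section upperLipEnvelope

variable {X : Type*} [PseudoMetricSpace X] {g : X → ℝ} {B : ℝ}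

theorem bddAbove_range_sub_mul_dist (hg : ∀ y, g y ≤ B) (K : ℝ≥0) (x : X) :
    BddAbove (Set.range fun y => g y - K * dist x y) :=
  ⟨B, Set.forall_mem_range.2 fun y => by
    linarith [hg y, mul_nonneg K.coe_nonneg (dist_nonneg (x := x) (y := y))]⟩

theorem le_upperLipEnvelope (hg : ∀ y, g y ≤ B) (K : ℝ≥0) (x : X) :
    g x ≤ upperLipEnvelope g K x := by
  simpa [upperLipEnvelope] using le_ciSup (bddAbove_range_sub_mul_dist hg K x) x

theorem upperLipEnvelope_le (hg : ∀ y, g y ≤ B) (K : ℝ≥0) (x : X) :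
    upperLipEnvelope g K x ≤ B :=
  have : Nonempty X := ⟨x⟩
  ciSup_le fun y => by linarith [hg y, mul_nonneg K.coe_nonneg (dist_nonneg (x := x) (y := y))]

theorem lipschitzWith_upperLipEnvelope (hg : ∀ y, g y ≤ B) (K : ℝ≥0) :
    LipschitzWith K (upperLipEnvelope g K) := by
  refine LipschitzWith.of_le_add_mul K fun x x' => ?_
  have : Nonempty X := ⟨x⟩
  refine ciSup_le fun y => ?_
  have hy := le_ciSup (bddAbove_range_sub_mul_dist hg K x') y
  have htri : dist x' y ≤ dist x x' + dist x y := by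
    linarith [dist_triangle x' x y, dist_comm x x']
  simp only [upperLipEnvelope] at hy ⊢
  nlinarith [K.coe_nonneg]

theorem tendsto_upperLipEnvelope (hg : ∀ y, g y ≤ B) {x : X} (hx : ContinuousAt g x) :
    Tendsto (fun m : ℕ => upperLipEnvelope g m x) atTop (𝓝 (g x)) := by
  refine tendsto_order.2 ⟨fun a ha => .of_forall fun m => ha.trans_le
    (le_upperLipEnvelope hg m x), fun a ha => ?_⟩
  obtain ⟨r, hr, hball⟩ := Metric.continuousAt_iff.1 hx ((a - g x) / 2) (by linarith)
  obtain ⟨m₀, hm₀⟩ := exists_nat_ge ((B - g x) / r)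
  filter_upwards [eventually_ge_atTop m₀] with m hm
  have hmr : B - g x ≤ m * r := by
    rw [div_le_iff₀ hr] at hm₀
    exact hm₀.trans (by gcongr)
  have : Nonempty X := ⟨x⟩
  refine lt_of_le_of_lt (ciSup_le fun y => ?_) (by linarith : g x + (a - g x) / 2 < a)
  have hm0 : (0 : ℝ) ≤ m := m.cast_nonneg
  rcases lt_or_ge (dist x y) r with hy | hy
  · have := (abs_lt.1 (hball (by rwa [dist_comm]))).2
    push_cast
    nlinarith [dist_nonneg (x := x) (y := y)]
  · push_cast
    nlinarith [hg y]

end upperLipEnvelope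

/-- Since `-upperLipEnvelope (-g) K` is the largest `K`-Lipschitz minorant of `g`, this is the
width of the Lipschitz sandwich around `g`. -/
noncomputable def lipEnvelopeGap {X : Type*} [PseudoMetricSpace X] (g : X → ℝ) (K : ℝ≥0)
    (x : X) : ℝ :=
  upperLipEnvelope g K x + upperLipEnvelope (-g) K x

section lipEnvelopeGap

variable {X : Type*} [PseudoMetricSpace X] {g : X → ℝ} {B : ℝ}

theorem abs_sub_upperLipEnvelope_le (hgB : ∀ x, |g x| ≤ B) (K : ℝ≥0) (x : X) :
    |g x - upperLipEnvelope g K x| ≤ lipEnvelopeGap g K x := by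
  have hg : ∀ y, g y ≤ B := fun y => (abs_le.1 (hgB y)).2
  have hg' : ∀ y, (-g) y ≤ B := fun y => neg_le.1 (abs_le.1 (hgB y)).1
  rw [abs_sub_comm, abs_of_nonneg (sub_nonneg.2 (le_upperLipEnvelope hg K x)), lipEnvelopeGap]
  linarith [le_upperLipEnvelope hg' K x, Pi.neg_apply g x]

theorem abs_upperLipEnvelope_le (hgB : ∀ x, |g x| ≤ B) (K : ℝ≥0) (x : X) :
    |upperLipEnvelope g K x| ≤ B := by
  have hg : ∀ y, g y ≤ B := fun y => (abs_le.1 (hgB y)).2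
  exact abs_le.2 ⟨(abs_le.1 (hgB x)).1.trans (le_upperLipEnvelope hg K x),
    upperLipEnvelope_le hg K x⟩

theorem abs_lipEnvelopeGap_le (hgB : ∀ x, |g x| ≤ B) (K : ℝ≥0) (x : X) :
    |lipEnvelopeGap g K x| ≤ 2 * B := by
  have hg' : ∀ y, (-g) y ≤ B := fun y => neg_le.1 (abs_le.1 (hgB y)).1
  rw [abs_of_nonneg ((abs_nonneg _).trans (abs_sub_upperLipEnvelope_le hgB K x)),
    lipEnvelopeGap]
  linarith [(abs_le.1 (abs_upperLipEnvelope_le hgB K x)).2, upperLipEnvelope_le hg' K x]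

theorem lipschitzWith_lipEnvelopeGap (hgB : ∀ x, |g x| ≤ B) (K : ℝ≥0) :
    LipschitzWith (K + K) (lipEnvelopeGap g K) :=
  (lipschitzWith_upperLipEnvelope (fun y => (abs_le.1 (hgB y)).2) K).add
    (lipschitzWith_upperLipEnvelope (fun y => neg_le.1 (abs_le.1 (hgB y)).1) K)

theorem tendsto_lipEnvelopeGap (hgB : ∀ x, |g x| ≤ B) {x : X} (hx : ContinuousAt g x) :
    Tendsto (fun m : ℕ => lipEnvelopeGap g m x) atTop (𝓝 0) := by
  have := (tendsto_upperLipEnvelope (fun y => (abs_le.1 (hgB y)).2) hx).add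
    (tendsto_upperLipEnvelope (g := -g) (fun y => neg_le.1 (abs_le.1 (hgB y)).1) hx.neg)
  rwa [Pi.neg_apply, add_neg_cancel] at this

end lipEnvelopeGap

theorem tendsto_of_approx {α ι κ : Type*} [PseudoMetricSpace α] {l : Filter ι} {l' : Filter κ}
    [l'.NeBot] {a : ι → α} {A : α} {b : κ → ι → α} {B : κ → α} {e : κ → ι → ℝ} {E : κ → ℝ}
    (hb : ∀ m, Tendsto (b m) l (𝓝 (B m))) (he : ∀ m, Tendsto (e m) l (𝓝 (E m)))
    (hab : ∀ m n, dist (a n) (b m n) ≤ e m n) (hBA : ∀ m, dist (B m) A ≤ E m)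
    (hE : Tendsto E l' (𝓝 0)) : Tendsto a l (𝓝 A) := by
  refine Metric.tendsto_nhds.2 fun ε hε => ?_
  obtain ⟨m, hm⟩ := (hE.eventually (gt_mem_nhds (by positivity : (0 : ℝ) < ε / 4))).exists
  filter_upwards [Metric.tendsto_nhds.1 (hb m) (ε / 4) (by positivity),
    (he m).eventually (gt_mem_nhds (by linarith : E m < E m + ε / 4))] with n hbn hen
  linarith [dist_triangle4 (a n) (b m n) (B m) A, hab m n, hBA m]

theorem abs_inv_mul_sum_sub_le {n : ℕ} {f f' e : Fin n → ℝ} (h : ∀ i, |f i - f' i| ≤ e i) :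
    |(n : ℝ)⁻¹ * ∑ i, f i - (n : ℝ)⁻¹ * ∑ i, f' i| ≤ (n : ℝ)⁻¹ * ∑ i, e i := by
  rw [← mul_sub, ← Finset.sum_sub_distrib, abs_mul, abs_of_nonneg (by positivity)]
  gcongr
  exact (Finset.abs_sum_le_sum_abs _ _).trans (Finset.sum_le_sum fun i _ => h i)

theorem abs_integral_sub_le {Ω : Type*} [MeasurableSpace Ω] {μ : Measure Ω} {f f' w : Ω → ℝ}
    (hf : Integrable f μ) (hf' : AEStronglyMeasurable f' μ) (hw : Integrable w μ)
    (h : ∀ᵐ ω ∂μ, |f ω - f' ω| ≤ w ω) : |∫ ω, f ω ∂μ - ∫ ω, f' ω ∂μ| ≤ ∫ ω, w ω ∂μ := by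
  have hsub : Integrable (fun ω => f ω - f' ω) μ :=
    hw.mono' (hf.1.sub hf') (by simpa only [Real.norm_eq_abs] using h)
  have hf'int : Integrable f' μ := (hf.sub hsub).congr (.of_forall fun ω => by simp)
  rw [← integral_sub hf hf'int]
  exact (abs_integral_le_integral_abs).trans (integral_mono_ae hsub.abs hw h)

theorem tendsto_integral_lipEnvelopeGap_mul {Ω E : Type*} [MeasurableSpace Ω] {μ : Measure Ω}
    [IsFiniteMeasure μ] [NormedAddCommGroup E] [MeasurableSpace E] [BorelSpace E] {V : Ω → E}
    (hV : Integrable V μ) {g : E → ℝ} {B : ℝ} (hgB : ∀ x, |g x| ≤ B)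
    (hcont : ∀ᵐ x ∂(μ.map V), ContinuousAt g x) (a b : ℝ) :
    Tendsto (fun m : ℕ => ∫ ω, lipEnvelopeGap g m (V ω) * (a + b * ‖V ω‖) ∂μ) atTop (𝓝 0) := by
  rw [← integral_zero Ω ℝ]
  refine tendsto_integral_of_dominated_convergence (fun ω => 2 * B * |a + b * ‖V ω‖|)
    (fun m => ((lipschitzWith_lipEnvelopeGap hgB m).continuous.mul
      (by fun_prop : Continuous fun x : E => a + b * ‖x‖)).comp_aestronglyMeasurable hV.1)
    (((integrable_const a).add (hV.norm.const_mul b)).abs.const_mul (2 * B))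
    (fun m => .of_forall fun ω => ?_) ?_
  · rw [Real.norm_eq_abs, abs_mul]
    exact mul_le_mul_of_nonneg_right (abs_lipEnvelopeGap_le hgB m (V ω)) (abs_nonneg _)
  · filter_upwards [ae_of_ae_map hV.1.aemeasurable hcont] with ω hω
    simpa using (tendsto_lipEnvelopeGap hgB hω).mul_const (a + b * ‖V ω‖)

theorem ConvW2.snocE_comp {t : ℕ} {v : ∀ n : ℕ, Fin n → EuclideanSpace ℝ (Fin t)}
    {Ωs : Type*} [MeasureSpace Ωs] [IsProbabilityMeasure (ℙ : Measure Ωs)]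
    {V : Ωs → EuclideanSpace ℝ (Fin t)} (hconv : ConvW2 v V) (hV : MemLp V 2)
    {g : EuclideanSpace ℝ (Fin t) → ℝ} {B : ℝ} (hgmeas : Measurable g) (hgB : ∀ x, |g x| ≤ B)
    (hcont : ∀ᵐ x ∂(Measure.map V ℙ), ContinuousAt g x) :
    ConvW2 (fun n i => snocE (v n i) (g (v n i))) (fun ω => snocE (V ω) (g (V ω))) := by
  intro ψ hψ
  obtain ⟨L, hL0, hL⟩ := id hψ
  set u : ℕ → EuclideanSpace ℝ (Fin t) → ℝ := fun m => upperLipEnvelope g m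
  set ρ : EuclideanSpace ℝ (Fin t) → ℝ := fun x => L * (1 + 2 * B) + 2 * L * ‖x‖
  have hρ_lip : LipschitzWith (2 * L).toNNReal ρ := LipschitzWith.of_dist_le' fun x y => by
    rw [Real.dist_eq, dist_eq_norm, show ρ x - ρ y = 2 * L * (‖x‖ - ‖y‖) by ring, abs_mul,
      abs_of_nonneg (by positivity)]
    exact mul_le_mul_of_nonneg_left (abs_norm_sub_norm_le x y) (by positivity)
  have hρ_nonneg : ∀ x, 0 ≤ ρ x := fun x => by
    have := (abs_nonneg _).trans (hgB x)
    positivity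
  have hpoint : ∀ m x, |ψ (snocE x (g x)) - ψ (snocE x (u m x))| ≤ lipEnvelopeGap g m x * ρ x :=
    fun m x => (abs_sub_le_of_snocE hL hL0.le x (hgB x) (abs_upperLipEnvelope_le hgB m x)).trans
      (mul_le_mul_of_nonneg_right (abs_sub_upperLipEnvelope_le hgB m x) (hρ_nonneg x))
  have hΦu : ∀ m : ℕ, PseudoLipschitz fun x => ψ (snocE x (u m x)) := fun m =>
    hψ.comp_lipschitzWith (lipschitzWith_upperLipEnvelope (fun y => (abs_le.1 (hgB y)).2) m).snocE
  have hw : ∀ m : ℕ, PseudoLipschitz fun x => lipEnvelopeGap g m x * ρ x := fun m =>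
    .of_lipschitzWith_mul (lipschitzWith_lipEnvelopeGap hgB m) hρ_lip (abs_lipEnvelopeGap_le hgB m)
  have hΦg_meas : AEStronglyMeasurable (fun ω => ψ (snocE (V ω) (g (V ω)))) ℙ :=
    hψ.continuous.comp_aestronglyMeasurable (continuous_snocE.comp_aestronglyMeasurable
      (hV.1.prodMk (hgmeas.comp_aemeasurable hV.1.aemeasurable).aestronglyMeasurable))
  refine tendsto_of_approx (l' := atTop) (fun m => hconv _ (hΦu m)) (fun m => hconv _ (hw m))
    (fun m n => abs_inv_mul_sum_sub_le fun i => hpoint m (v n i)) (fun m => ?_)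
    (tendsto_integral_lipEnvelopeGap_mul (hV.integrable one_le_two) hgB hcont _ _)
  rw [Real.dist_eq]
  refine abs_integral_sub_le ((hΦu m).integrable_comp hV) hΦg_meas
    ((hw m).integrable_comp hV) (.of_forall fun ω => ?_)
  rw [abs_sub_comm]
  exact hpoint m (V ω)

theorem statement1_general {t : ℕ} {L₀ : NNReal}
    (g : EuclideanSpace ℝ (Fin t) → ℝ) (hgmeas : Measurable g)
    (hgbd : ∀ x, |g x| ≤ L₀)
    (v : ∀ n : ℕ, Fin n → EuclideanSpace ℝ (Fin t))
    {Ωs : Type*} [MeasureSpace Ωs] [IsProbabilityMeasure (ℙ : Measure Ωs)]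
    (V : Ωs → EuclideanSpace ℝ (Fin t)) (hV : MemLp V 2)
    (hconv : ConvW2 v V)
    (hcont : ∀ᵐ x ∂(Measure.map V ℙ), ContinuousAt g x) :
    ConvW2 (fun n i => snocE (v n i) (g (v n i))) (fun ω => snocE (V ω) (g (V ω))) :=
  hconv.snocE_comp hV hgmeas hgbd hcont

/-- Wasserstein-2 convergence is preserved when appending the (a.e. defined)
partial derivative `∂f/∂x_k` of a Lipschitz function `f`, provided the law of `V` is
absolutely continuous w.r.t. Lebesgue measure and the chosen version `g` of the derivative
is continuous at almost every point of the law of `V`. -/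
theorem statement1 {t : ℕ} (ht : 1 ≤ t) {L₀ : NNReal}
    (f : EuclideanSpace ℝ (Fin t) → ℝ) (hf : LipschitzWith L₀ f) (k : Fin t)
    (g : EuclideanSpace ℝ (Fin t) → ℝ) (hgmeas : Measurable g)
    (hgbd : ∀ x, |g x| ≤ L₀)
    (hg : ∀ (x : EuclideanSpace ℝ (Fin t)) (d : ℝ),
      HasDerivAt (fun s : ℝ => f (updE x k s)) d ((WithLp.equiv 2 (Fin t → ℝ)) x k) →
      g x = d)
    (v : ∀ n : ℕ, Fin n → EuclideanSpace ℝ (Fin t))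
    {Ωs : Type*} [MeasureSpace Ωs] [IsProbabilityMeasure (ℙ : Measure Ωs)]
    (V : Ωs → EuclideanSpace ℝ (Fin t)) (hVmeas : Measurable V) (hV : MemLp V 2)
    (hconv : ConvW2 v V)
    (hac : (Measure.map V ℙ) ≪ (volume : Measure (EuclideanSpace ℝ (Fin t))))
    (hcont : ∀ᵐ x ∂(Measure.map V ℙ), ContinuousAt g x) :
    ConvW2 (fun n i => snocE (v n i) (g (v n i))) (fun ω => snocE (V ω) (g (V ω))) :=
  statement1_general g hgmeas hgbd v V hV hconv hcont
end

section
/- Let σ > 0 and let ν be a nonzero σ-finite Borel measure on ℝ such that for every r ∈ ℝ, 0 < ∫ exp(−(z−r)²/(2σ²)) dν(z) < ∞ and ∫ z² exp(−(z−r)²/(2σ²)) dν(z) < ∞. Define the posterior mean m(r) = (∫ z exp(−(z−r)²/(2σ²)) dν(z)) / (∫ exp(−(z−r)²/(2σ²)) dν(z)) and the posterior variance v(r) = (∫ z² exp(−(z−r)²/(2σ²)) dν(z)) / (∫ exp(−(z−r)²/(2σ²)) dν(z)) − m(r)². Then m is differentiable on ℝ and m′(r) = v(r)/σ² for every r ∈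 ℝ. -/
/-!
Differentiate under the integral sign. With `K r z = exp (-(z - r)² / (2σ²))` one has
`∂ᵣ K = (z - r) / σ² · K`, so the moments `Zₖ r = ∫ zᵏ K r z dν` satisfy
`Zₖ' = (Zₖ₊₁ - r Zₖ) / σ²`, and the quotient rule gives
`m' = (Z₂ Z₀ - Z₁²) / (σ² Z₀²) = v / σ²`. Domination near `r₀` comes from bounding the kernel
on `[r₀ - 1, r₀ + 1]` by its translates at the two endpoints, so the integrability hypotheses
at single points suffice.
-/

open MeasureTheory

noncomputable def gaussianKernel (σ r z : ℝ) : ℝ := Real.exp (-(z - r) ^ 2 / (2 * σ ^ 2))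

lemma gaussianKernel_pos (σ r z : ℝ) : 0 < gaussianKernel σ r z := Real.exp_pos _

lemma hasDerivAt_gaussianKernel (σ z r : ℝ) :
    HasDerivAt (fun r => gaussianKernel σ r z) ((z - r) / σ ^ 2 * gaussianKernel σ r z) r := by
  have hsub : HasDerivAt (fun r : ℝ => z - r) (-1) r := by
    simpa using (hasDerivAt_id r).const_sub z
  have hexponent : HasDerivAt (fun r => -(z - r) ^ 2 / (2 * σ ^ 2)) ((z - r) / σ ^ 2) r := by
    refine ((hsub.fun_pow 2).fun_neg.div_const (2 * σ ^ 2)).congr_deriv ?_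
    push_cast
    ring
  simpa only [gaussianKernel, mul_comm] using hexponent.exp

lemma gaussianKernel_le_of_sq_sub_le {σ r r₁ z c : ℝ} (h : (z - r₁) ^ 2 ≤ (z - r) ^ 2 + c) :
    gaussianKernel σ r z ≤ Real.exp (c / (2 * σ ^ 2)) * gaussianKernel σ r₁ z := by
  rw [gaussianKernel, gaussianKernel, ← Real.exp_add, Real.exp_le_exp, ← add_div]
  gcongr
  linarith

lemma gaussianKernel_le_endpoints {σ r₀ r : ℝ} (hr : r ∈ Set.Icc (r₀ - 1) (r₀ + 1)) (z : ℝ) :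
    gaussianKernel σ r z ≤ Real.exp (1 / (2 * σ ^ 2)) *
      (gaussianKernel σ (r₀ - 1) z + gaussianKernel σ (r₀ + 1) z) := by
  obtain ⟨hr₁, hr₂⟩ := hr
  have hpos := gaussianKernel_pos σ
  rw [mul_add]
  rcases le_total r₀ z with hz | hz
  · have := gaussianKernel_le_of_sq_sub_le (σ := σ) (r₁ := r₀ + 1) (c := 1)
      (show (z - (r₀ + 1)) ^ 2 ≤ (z - r) ^ 2 + 1 by
        nlinarith [mul_nonneg (sub_nonneg.2 hr₂) (sub_nonneg.2 hz), sq_nonneg (r - r₀)])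
    nlinarith [hpos (r₀ - 1) z, Real.exp_pos (1 / (2 * σ ^ 2))]
  · have := gaussianKernel_le_of_sq_sub_le (σ := σ) (r₁ := r₀ - 1) (c := 1)
      (show (z - (r₀ - 1)) ^ 2 ≤ (z - r) ^ 2 + 1 by
        nlinarith [mul_nonneg (sub_nonneg.2 hr₁) (sub_nonneg.2 hz), sq_nonneg (r - r₀)])
    nlinarith [hpos (r₀ + 1) z, Real.exp_pos (1 / (2 * σ ^ 2))]

lemma MeasureTheory.Integrable.id_mul_of_sq_mul {ν : Measure ℝ} {f : ℝ → ℝ} (hf : Integrable f ν)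
    (hf₂ : Integrable (fun z => z ^ 2 * f z) ν) : Integrable (fun z => z * f z) ν := by
  refine (hf.norm.add hf₂.norm).mono' (aestronglyMeasurable_id.mul hf.1) ?_
  refine Filter.Eventually.of_forall fun z => ?_
  have hz : |z| ≤ 1 + z ^ 2 := by nlinarith [abs_nonneg z, sq_abs z]
  simp only [Real.norm_eq_abs, abs_mul, Pi.add_apply, abs_pow, sq_abs]
  nlinarith [mul_le_mul_of_nonneg_right hz (abs_nonneg (f z))]

section GaussianDomination

variable {ν : Measure ℝ} {σ : ℝ} {g : ℝ → ℝ}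

lemma norm_mul_deriv_gaussianKernel_le {r₀ r : ℝ} (hr : r ∈ Set.Icc (r₀ - 1) (r₀ + 1)) (z : ℝ) :
    ‖g z * ((z - r) / σ ^ 2 * gaussianKernel σ r z)‖ ≤
      Real.exp (1 / (2 * σ ^ 2)) / σ ^ 2 * ((|z * g z| + (|r₀| + 1) * |g z|) *
        (gaussianKernel σ (r₀ - 1) z + gaussianKernel σ (r₀ + 1) z)) := by
  have hK := gaussianKernel_le_endpoints (σ := σ) hr z
  have hr' : |r| ≤ |r₀| + 1 :=
    abs_le.2 ⟨by linarith [neg_abs_le r₀, hr.1], by linarith [le_abs_self r₀, hr.2]⟩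
  have hweight : |g z| * |z - r| ≤ |z * g z| + (|r₀| + 1) * |g z| := by
    rw [abs_mul, mul_comm |z|]
    nlinarith [abs_sub z r, abs_nonneg (g z)]
  calc ‖g z * ((z - r) / σ ^ 2 * gaussianKernel σ r z)‖
      = |g z| * |z - r| / σ ^ 2 * gaussianKernel σ r z := by
        simp only [norm_mul, norm_div, Real.norm_eq_abs, abs_pow, sq_abs,
          abs_of_pos (gaussianKernel_pos σ r z)]
        ring
    _ ≤ (|z * g z| + (|r₀| + 1) * |g z|) / σ ^ 2 *
        (Real.exp (1 / (2 * σ ^ 2)) *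
          (gaussianKernel σ (r₀ - 1) z + gaussianKernel σ (r₀ + 1) z)) := by
        gcongr
        exact (gaussianKernel_pos σ r z).le
    _ = _ := by ring

lemma hasDerivAt_integral_mul_gaussianKernel
    (hg : ∀ r, Integrable (fun z => g z * gaussianKernel σ r z) ν)
    (hzg : ∀ r, Integrable (fun z => z * g z * gaussianKernel σ r z) ν) (r₀ : ℝ) :
    HasDerivAt (fun r => ∫ z, g z * gaussianKernel σ r z ∂ν)
      ((∫ z, z * g z * gaussianKernel σ r₀ z ∂ν -
        r₀ * ∫ z, g z * gaussianKernel σ r₀ z ∂ν) / σ ^ 2) r₀ := by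
  have hderiv_eq : (fun z => g z * ((z - r₀) / σ ^ 2 * gaussianKernel σ r₀ z)) =
      fun z => (z * g z * gaussianKernel σ r₀ z - r₀ * (g z * gaussianKernel σ r₀ z)) / σ ^ 2 := by
    funext z
    ring
  have hderiv_int : Integrable (fun z => g z * ((z - r₀) / σ ^ 2 * gaussianKernel σ r₀ z)) ν := by
    rw [hderiv_eq]
    exact ((hzg r₀).sub ((hg r₀).const_mul r₀)).div_const _
  have hbound_int : Integrable (fun z => Real.exp (1 / (2 * σ ^ 2)) / σ ^ 2 *
      ((|z * g z| + (|r₀| + 1) * |g z|) *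
        (gaussianKernel σ (r₀ - 1) z + gaussianKernel σ (r₀ + 1) z))) ν := by
    refine Integrable.const_mul (((((hzg (r₀ - 1)).norm.add (hzg (r₀ + 1)).norm)).add
      (((hg (r₀ - 1)).norm.add (hg (r₀ + 1)).norm).const_mul (|r₀| + 1))).congr
        (ae_of_all _ fun z => ?_)) _
    simp only [Pi.add_apply, norm_mul, Real.norm_eq_abs, abs_mul,
      abs_of_pos (gaussianKernel_pos σ _ z)]
    ring
  have key := hasDerivAt_integral_of_dominated_loc_of_deriv_le
    (F := fun r z => g z * gaussianKernel σ r z)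
    (F' := fun r z => g z * ((z - r) / σ ^ 2 * gaussianKernel σ r z))
    (Icc_mem_nhds (sub_one_lt r₀) (lt_add_one r₀))
    (Filter.Eventually.of_forall fun r => (hg r).aestronglyMeasurable) (hg r₀)
    hderiv_int.aestronglyMeasurable
    (ae_of_all _ fun z r hr => norm_mul_deriv_gaussianKernel_le hr z) hbound_int
    (ae_of_all _ fun z r _ => (hasDerivAt_gaussianKernel σ z r).const_mul (g z))
  rw [hderiv_eq, integral_div, integral_sub (hzg r₀) ((hg r₀).const_mul r₀),
    integral_const_mul] at key
  exact key.2

end GaussianDomination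

theorem statement4_general (σ : ℝ) (ν : Measure ℝ)
    (hInt : ∀ r : ℝ, Integrable (fun z => Real.exp (-(z - r) ^ 2 / (2 * σ ^ 2))) ν)
    (hPos : ∀ r : ℝ, 0 < ∫ z, Real.exp (-(z - r) ^ 2 / (2 * σ ^ 2)) ∂ν)
    (hInt2 : ∀ r : ℝ, Integrable (fun z => z ^ 2 * Real.exp (-(z - r) ^ 2 / (2 * σ ^ 2))) ν)
    (m V : ℝ → ℝ)
    (hm : ∀ r : ℝ, m r = (∫ z, z * Real.exp (-(z - r) ^ 2 / (2 * σ ^ 2)) ∂ν) /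
      (∫ z, Real.exp (-(z - r) ^ 2 / (2 * σ ^ 2)) ∂ν))
    (hV : ∀ r : ℝ, V r = (∫ z, z ^ 2 * Real.exp (-(z - r) ^ 2 / (2 * σ ^ 2)) ∂ν) /
      (∫ z, Real.exp (-(z - r) ^ 2 / (2 * σ ^ 2)) ∂ν) - (m r) ^ 2) :
    ∀ r : ℝ, HasDerivAt m (V r / σ ^ 2) r := by
  intro r
  have hZ₀_ne := (hPos r).ne'
  have hZ₀int : ∀ r, Integrable (fun z => gaussianKernel σ r z) ν := hInt
  have hZ₂int : ∀ r, Integrable (fun z => z ^ 2 * gaussianKernel σ r z) ν := hInt2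
  have hZ₁int : ∀ r, Integrable (fun z => z * gaussianKernel σ r z) ν :=
    fun r => (hZ₀int r).id_mul_of_sq_mul (hZ₂int r)
  have hZ₀ := hasDerivAt_integral_mul_gaussianKernel (g := fun _ => 1)
    (by simpa using hZ₀int) (by simpa using hZ₁int) r
  have hZ₁ := hasDerivAt_integral_mul_gaussianKernel (g := id)
    (by simpa using hZ₁int) (by simpa [← sq] using hZ₂int) r
  simp only [one_mul, mul_one, id, ← sq] at hZ₀ hZ₁
  rw [show m = fun r => (∫ z, z * gaussianKernel σ r z ∂ν) / ∫ z, gaussianKernel σ r z ∂ν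
    from funext hm]
  refine (hZ₁.div hZ₀ hZ₀_ne).congr_deriv ?_
  rw [hV, hm]
  unfold gaussianKernel
  field_simp
  ring

/-- for a Gaussian observation channel with noise variance `σ²` and base
measure `ν`, the posterior mean `m(r)` is differentiable in the observation `r` and its
derivative equals the posterior variance divided by `σ²`. -/
theorem statement4 (σ : ℝ) (hσ : 0 < σ) (ν : Measure ℝ) [SigmaFinite ν] (hν : ν ≠ 0)
    (hInt : ∀ r : ℝ, Integrable (fun z => Real.exp (-(z - r) ^ 2 / (2 * σ ^ 2))) ν)
    (hPos : ∀ r : ℝ, 0 < ∫ z, Real.exp (-(z - r) ^ 2 / (2 * σ ^ 2)) ∂ν)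
    (hInt2 : ∀ r : ℝ, Integrable (fun z => z ^ 2 * Real.exp (-(z - r) ^ 2 / (2 * σ ^ 2))) ν)
    (m V : ℝ → ℝ)
    (hm : ∀ r : ℝ, m r = (∫ z, z * Real.exp (-(z - r) ^ 2 / (2 * σ ^ 2)) ∂ν) /
      (∫ z, Real.exp (-(z - r) ^ 2 / (2 * σ ^ 2)) ∂ν))
    (hV : ∀ r : ℝ, V r = (∫ z, z ^ 2 * Real.exp (-(z - r) ^ 2 / (2 * σ ^ 2)) ∂ν) /
      (∫ z, Real.exp (-(z - r) ^ 2 / (2 * σ ^ 2)) ∂ν) - (m r) ^ 2) :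
    ∀ r : ℝ, HasDerivAt m (V r / σ ^ 2) r :=
  statement4_general σ ν hInt hPos hInt2 m V hm hV
end

section
/- Let r₀, r₁ ∈ ℝ and σ₀, σ₁ > 0. Define r_P = (r₀σ₁² + r₁σ₀²)/(σ₀² + σ₁²), σ_P² = σ₀²σ₁²/(σ₀² + σ₁²), C_P = exp(−r₀²/(2σ₀²) − r₁²/(2σ₁²) + r_P²/(2σ_P²)), and C_N = exp(−r₁²/(2σ₁²)). Let μ be the measure on ℝ with density w(z) = exp(−(z−r₀)²/(2σ₀²) − (max(z,0)−r₁)²/(2σ₁²)) with respect to Lebesgue measure. Then the pushforward of μ under the map z ↦ max(z, 0) equals C_P · ν_P + C_N · M_N · δ₀, where ν_P is the measure on ℝ with Lebesgue density z ↦ 1_{(0,∞)}(z) · exp(−(z−r_P)²/(2σ_P²)), M_N = ∫_{−∞}^0 exp(−(z−r₀)²/(2σ₀²)) dz, and δ₀ is the Dirac measure at 0. -/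
/-!
Since `max z 0 = z` on `(0, ∞)` and `= 0` on `(-∞, 0]`, the pushforward of any measure `μ` is
`μ` restricted to `(0, ∞)` plus the atom `μ (-∞, 0] • δ₀`. On `(0, ∞)` the density is a product
of two Gaussians in `z`; completing the square turns it into `C_P` times the Gaussian of mean `r_P`
and variance `σ_P²`. On `(-∞, 0]` the second factor is the constant `C_N`.
-/

open MeasureTheory Set Real

theorem map_max_eq_restrict_Ioi_add_dirac {α : Type*} [MeasurableSpace α] [TopologicalSpace α]
    [LinearOrder α] [OrderClosedTopology α] [BorelSpace α] (μ : Measure α) (a : α) :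
    μ.map (fun z => max z a) = μ.restrict (Ioi a) + μ (Iic a) • Measure.dirac a := by
  ext s hs
  have hmax : Measurable fun z : α => max z a := (continuous_id.max continuous_const).measurable
  have hIoi : (fun z => max z a) ⁻¹' s ∩ Ioi a = s ∩ Ioi a := by
    ext z
    refine and_congr_left fun (hz : a < z) => ?_
    rw [mem_preimage, max_eq_left hz.le]
  rw [Measure.map_apply hmax hs, ← measure_inter_add_sdiff _ measurableSet_Ioi, hIoi,
    Measure.add_apply, Measure.restrict_apply hs, Measure.smul_apply, Measure.dirac_apply' _ hs]
  by_cases ha : a ∈ s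
  · have hIic : (fun z => max z a) ⁻¹' s \ Ioi a = Iic a := by
      ext z
      simp +contextual [ha]
    simp [hIic, ha]
  · have hIic : (fun z => max z a) ⁻¹' s \ Ioi a = ∅ := by
      refine eq_empty_of_forall_notMem fun z ⟨hzs, hza⟩ => ha ?_
      simpa only [mem_preimage, max_eq_right (not_lt.mp hza)] using hzs
    simp [hIic, ha]

theorem integrable_exp_neg_sub_sq_div (r : ℝ) {σ : ℝ} (hσ : σ ≠ 0) :
    Integrable fun z => exp (-(z - r) ^ 2 / (2 * σ ^ 2)) := by
  have hb : (0 : ℝ) < 1 / (2 * σ ^ 2) := by positivity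
  refine ((integrable_exp_neg_mul_sq hb).comp_sub_right r).congr (.of_forall fun z => ?_)
  field_simp

theorem gaussian_exponent_add {r₀ r₁ σ₀ σ₁ rP σP2 : ℝ} (hσ₀ : σ₀ ≠ 0) (hσ₁ : σ₁ ≠ 0)
    (hrP : rP = (r₀ * σ₁ ^ 2 + r₁ * σ₀ ^ 2) / (σ₀ ^ 2 + σ₁ ^ 2))
    (hσP2 : σP2 = σ₀ ^ 2 * σ₁ ^ 2 / (σ₀ ^ 2 + σ₁ ^ 2)) (z : ℝ) :
    -(z - r₀) ^ 2 / (2 * σ₀ ^ 2) - (z - r₁) ^ 2 / (2 * σ₁ ^ 2) =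
      -r₀ ^ 2 / (2 * σ₀ ^ 2) - r₁ ^ 2 / (2 * σ₁ ^ 2) + rP ^ 2 / (2 * σP2) +
        -(z - rP) ^ 2 / (2 * σP2) := by
  have : σ₀ ^ 2 + σ₁ ^ 2 ≠ 0 := by positivity
  subst hrP hσP2
  field_simp
  ring

/-- the marginal law of the output of a ReLU under the joint tilted measure.
The pushforward under `z ↦ max z 0` of the measure with Lebesgue density
`exp(−(z−r₀)²/(2σ₀²) − (max z 0 −r₁)²/(2σ₁²))` equals `C_P · ν_P + C_N · M_N · δ₀`, where
`ν_P` has Lebesgue density `1_{(0,∞)}(z) exp(−(z−r_P)²/(2σ_P²))` and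
`M_N = ∫_{−∞}^0 exp(−(z−r₀)²/(2σ₀²)) dz`. -/
theorem statement7 (r₀ r₁ σ₀ σ₁ : ℝ) (hσ₀ : 0 < σ₀) (hσ₁ : 0 < σ₁)
    (rP σP2 CP CN MN : ℝ)
    (hrP : rP = (r₀ * σ₁ ^ 2 + r₁ * σ₀ ^ 2) / (σ₀ ^ 2 + σ₁ ^ 2))
    (hσP2 : σP2 = σ₀ ^ 2 * σ₁ ^ 2 / (σ₀ ^ 2 + σ₁ ^ 2))
    (hCP : CP = Real.exp (-r₀ ^ 2 / (2 * σ₀ ^ 2) - r₁ ^ 2 / (2 * σ₁ ^ 2) + rP ^ 2 / (2 * σP2)))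
    (hCN : CN = Real.exp (-r₁ ^ 2 / (2 * σ₁ ^ 2)))
    (hMN : MN = ∫ z in Set.Iic (0 : ℝ), Real.exp (-(z - r₀) ^ 2 / (2 * σ₀ ^ 2)))
    (μ νP : Measure ℝ)
    (hμ : μ = volume.withDensity fun z => ENNReal.ofReal
      (Real.exp (-(z - r₀) ^ 2 / (2 * σ₀ ^ 2) - (max z 0 - r₁) ^ 2 / (2 * σ₁ ^ 2))))
    (hνP : νP = volume.withDensity fun z => ENNReal.ofReal
      (Set.indicator (Set.Ioi (0 : ℝ)) (fun w => Real.exp (-(w - rP) ^ 2 / (2 * σP2))) z)) :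
    Measure.map (fun z => max z 0) μ =
      ENNReal.ofReal CP • νP + ENNReal.ofReal (CN * MN) • Measure.dirac (0 : ℝ) := by
  have hpos : μ.restrict (Ioi 0) = ENNReal.ofReal CP • νP := by
    have hind : (fun z => ENNReal.ofReal ((Ioi (0 : ℝ)).indicator
        (fun w => exp (-(w - rP) ^ 2 / (2 * σP2))) z)) =
        (Ioi 0).indicator fun w => ENNReal.ofReal (exp (-(w - rP) ^ 2 / (2 * σP2))) :=
      (indicator_comp_of_zero ENNReal.ofReal_zero).symm
    rw [hμ, hνP, restrict_withDensity measurableSet_Ioi, hind,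
      withDensity_indicator measurableSet_Ioi, ← withDensity_smul _ (by fun_prop)]
    refine withDensity_congr_ae <|
      ae_restrict_of_forall_mem measurableSet_Ioi fun z (hz : 0 < z) => ?_
    dsimp only
    rw [Pi.smul_apply, smul_eq_mul, ← ENNReal.ofReal_mul (hCP ▸ (exp_pos _).le), hCP,
      ← exp_add, ← gaussian_exponent_add hσ₀.ne' hσ₁.ne' hrP hσP2, max_eq_left hz.le]
  have hneg : μ (Iic 0) = ENNReal.ofReal (CN * MN) := by
    have hg₀ := integrable_exp_neg_sub_sq_div r₀ hσ₀.ne'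
    rw [hμ, withDensity_apply _ measurableSet_Iic, hMN, ENNReal.ofReal_mul (hCN ▸ (exp_pos _).le),
      ofReal_integral_eq_lintegral_ofReal hg₀.integrableOn (.of_forall fun z => (exp_pos _).le),
      ← lintegral_const_mul _ (by fun_prop)]
    refine setLIntegral_congr_fun measurableSet_Iic fun z hz => ?_
    rw [← ENNReal.ofReal_mul (hCN ▸ (exp_pos _).le), hCN, ← exp_add, max_eq_right hz]
    congr 2
    ring
  rw [map_max_eq_restrict_Ioi_add_dirac, hpos, hneg]
end

section
/- Let t ≥ 1 and let P, Q, Γ, Δ ∈ ℝ^{(t+1)×(t+1)} with P and Q lower triangular and PQ strictly lower triangular (this holds in particular when at least one of P, Q is strictly lower triangular). For j ≥ 1 define F^{(j)}(P, Q, Γ, Δ) = Σ_{i=1}^{j} (PQ)^i Γ ((PQ)ᵀ)^{j−i} + Σ_{i=1}^{j−1} (PQ)^i P Δ Pᵀ ((PQ)ᵀ)^{j−i−1}, and F^{(0)}(P, Q, Γ, Δ) = Γ. For a matrix A ∈ ℝ^{(t+1)×(t+1)} let A_t ∈ ℝ^{t×t} denote its top-left t×t block. Then for every j ≥ 0, the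 top-left t×t block of F^{(j)}(P, Q, Γ, Δ) equals F^{(j)}(P_t, Q_t, Γ_t, Δ_t). -/
open Matrix Finset

/-- The common form `F^{(j)}(P, Q, Γ, Δ)` of the state-evolution matrices `Ξ^{(j)}` and
`Θ^{(j)}`: `F^{(0)} = Γ` and, for `j ≥ 1`,
`F^{(j)} = Σ_{i=1}^{j} (PQ)^i Γ ((PQ)ᵀ)^{j−i} + Σ_{i=1}^{j−1} (PQ)^i P Δ Pᵀ ((PQ)ᵀ)^{j−i−1}`. -/
noncomputable def Fmat {m : ℕ} (P Q Γ Δ : Matrix (Fin m) (Fin m) ℝ) (j : ℕ) :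
    Matrix (Fin m) (Fin m) ℝ :=
  if j = 0 then Γ
  else (∑ i ∈ Icc 1 j, (P * Q) ^ i * Γ * ((P * Q)ᵀ) ^ (j - i)) +
    ∑ i ∈ Icc 1 (j - 1), (P * Q) ^ i * P * Δ * Pᵀ * ((P * Q)ᵀ) ^ (j - i - 1)

/-!
Write `A = [[A_t, u], [vᵀ, a]]` and `B = [[B_t, x], [yᵀ, b]]`; then `(AB)_t = A_t B_t + u yᵀ`, so
taking the top-left block is multiplicative as soon as `u = 0` or `y = 0`. Every left factor
`(PQ)^i`, `(PQ)^i P`, … occurring in `F^{(j)}` has `u = 0`, because `P` and `PQ` are lower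
triangular and this property is stable under products, while the right factors `Pᵀ`, `((PQ)ᵀ)^k`
have `y = 0` by transposition.
-/

theorem Matrix.submatrix_finset_sum {ι l m α β γ : Type*} [AddCommMonoid α] (s : Finset ι)
    (A : ι → Matrix β γ α) (r : l → β) (c : m → γ) :
    (∑ i ∈ s, A i).submatrix r c = ∑ i ∈ s, (A i).submatrix r c := by
  ext a b
  simp only [submatrix_apply, sum_apply]

def lastColumnTopZero (R : Type*) [Semiring R] (n : ℕ) :
    Submonoid (Matrix (Fin (n + 1)) (Fin (n + 1)) R) where
  carrier := {A | ∀ i : Fin n, A i.castSucc (Fin.last n) = 0}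
  one_mem' i := one_apply_ne (Fin.castSucc_lt_last i).ne
  mul_mem' {A B} hA hB i := by
    rw [mul_apply, Fin.sum_univ_castSucc, hA i, zero_mul, add_zero]
    exact sum_eq_zero fun k _ => by rw [hB k, mul_zero]

section LastColumn

variable {R : Type*} [Semiring R] {n : ℕ} {A B : Matrix (Fin (n + 1)) (Fin (n + 1)) R}

theorem mem_lastColumnTopZero_of_lower (hA : ∀ i j, i < j → A i j = 0) :
    A ∈ lastColumnTopZero R n :=
  fun i => hA _ _ (Fin.castSucc_lt_last i)

theorem submatrix_castSucc_mul_of_mem_left (hA : A ∈ lastColumnTopZero R n) :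
    (A * B).submatrix Fin.castSucc Fin.castSucc =
      A.submatrix Fin.castSucc Fin.castSucc * B.submatrix Fin.castSucc Fin.castSucc := by
  ext i j
  simp only [submatrix_apply, mul_apply, Fin.sum_univ_castSucc, hA i, zero_mul, add_zero]

theorem submatrix_castSucc_mul_of_mem_right (hB : Bᵀ ∈ lastColumnTopZero R n) :
    (A * B).submatrix Fin.castSucc Fin.castSucc =
      A.submatrix Fin.castSucc Fin.castSucc * B.submatrix Fin.castSucc Fin.castSucc := by
  ext i j
  simp only [submatrix_apply, mul_apply, Fin.sum_univ_castSucc, ← transpose_apply B, hB j,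
    mul_zero, add_zero]

theorem submatrix_castSucc_pow (hA : A ∈ lastColumnTopZero R n) (k : ℕ) :
    (A ^ k).submatrix Fin.castSucc Fin.castSucc = A.submatrix Fin.castSucc Fin.castSucc ^ k := by
  induction k with
  | zero => exact submatrix_one _ (Fin.castSucc_injective n)
  | succ k ih =>
    rw [pow_succ, submatrix_castSucc_mul_of_mem_left (pow_mem hA k), ih, pow_succ]

theorem submatrix_castSucc_transpose_pow {R : Type*} [CommSemiring R]
    {A : Matrix (Fin (n + 1)) (Fin (n + 1)) R} (hA : A ∈ lastColumnTopZero R n) (k : ℕ) :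
    (Aᵀ ^ k).submatrix Fin.castSucc Fin.castSucc =
      (A.submatrix Fin.castSucc Fin.castSucc)ᵀ ^ k := by
  rw [← transpose_pow, ← transpose_submatrix, submatrix_castSucc_pow hA, transpose_pow]

end LastColumn

theorem Fmat_submatrix_castSucc {n : ℕ} (P Q Γ Δ : Matrix (Fin (n + 1)) (Fin (n + 1)) ℝ)
    (hP : P ∈ lastColumnTopZero ℝ n) (hPQ : P * Q ∈ lastColumnTopZero ℝ n) (j : ℕ) :
    (Fmat P Q Γ Δ j).submatrix Fin.castSucc Fin.castSucc =
      Fmat (P.submatrix Fin.castSucc Fin.castSucc) (Q.submatrix Fin.castSucc Fin.castSucc)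
        (Γ.submatrix Fin.castSucc Fin.castSucc) (Δ.submatrix Fin.castSucc Fin.castSucc) j := by
  have hPQt (k : ℕ) : (((P * Q)ᵀ) ^ k)ᵀ ∈ lastColumnTopZero ℝ n := by
    simpa only [transpose_pow, transpose_transpose] using pow_mem hPQ k
  have hPt : Pᵀᵀ ∈ lastColumnTopZero ℝ n := by rwa [transpose_transpose]
  unfold Fmat
  split_ifs
  · rfl
  rw [submatrix_add, Pi.add_apply, Pi.add_apply, submatrix_finset_sum, submatrix_finset_sum]
  congr 1 <;> refine sum_congr rfl fun i _ => ?_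
  · rw [submatrix_castSucc_mul_of_mem_right (hPQt _),
      submatrix_castSucc_mul_of_mem_left (pow_mem hPQ i), submatrix_castSucc_pow hPQ,
      submatrix_castSucc_transpose_pow hPQ, submatrix_castSucc_mul_of_mem_left hP]
  · rw [submatrix_castSucc_mul_of_mem_right (hPQt _), submatrix_castSucc_mul_of_mem_right hPt,
      submatrix_castSucc_mul_of_mem_left (mul_mem (pow_mem hPQ i) hP),
      submatrix_castSucc_mul_of_mem_left (pow_mem hPQ i), submatrix_castSucc_pow hPQ,
      submatrix_castSucc_transpose_pow hPQ, submatrix_castSucc_mul_of_mem_left hP,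
      transpose_submatrix]

theorem statement9_general {t : ℕ}
    (P Q Γ Δ : Matrix (Fin (t + 1)) (Fin (t + 1)) ℝ)
    (hP : ∀ i j : Fin (t + 1), i < j → P i j = 0)
    (hPQ : ∀ i j : Fin (t + 1), i ≤ j → (P * Q) i j = 0) :
    ∀ j : ℕ,
      (Fmat P Q Γ Δ j).submatrix (Fin.castSucc : Fin t → Fin (t + 1)) Fin.castSucc =
      Fmat (P.submatrix Fin.castSucc Fin.castSucc) (Q.submatrix Fin.castSucc Fin.castSucc)
        (Γ.submatrix Fin.castSucc Fin.castSucc) (Δ.submatrix Fin.castSucc Fin.castSucc) j :=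
  Fmat_submatrix_castSucc P Q Γ Δ (mem_lastColumnTopZero_of_lower hP)
    (mem_lastColumnTopZero_of_lower fun i j hij => hPQ i j hij.le)

/-- if `P, Q` are lower triangular and `PQ` is strictly lower triangular, then the
top-left `t×t` block of `F^{(j)}(P, Q, Γ, Δ)` equals `F^{(j)}` of the top-left `t×t` blocks. -/
theorem statement9 {t : ℕ} (ht : 1 ≤ t)
    (P Q Γ Δ : Matrix (Fin (t + 1)) (Fin (t + 1)) ℝ)
    (hP : ∀ i j : Fin (t + 1), i < j → P i j = 0)
    (hQ : ∀ i j : Fin (t + 1), i < j → Q i j = 0)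
    (hPQ : ∀ i j : Fin (t + 1), i ≤ j → (P * Q) i j = 0) :
    ∀ j : ℕ,
      (Fmat P Q Γ Δ j).submatrix (Fin.castSucc : Fin t → Fin (t + 1)) Fin.castSucc =
      Fmat (P.submatrix Fin.castSucc Fin.castSucc) (Q.submatrix Fin.castSucc Fin.castSucc)
        (Γ.submatrix Fin.castSucc Fin.castSucc) (Δ.submatrix Fin.castSucc Fin.castSucc) j :=
  statement9_general P Q Γ Δ hP hPQ
end
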